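/- Let f : ℝ^d → ℂ be continuous and h_1, ..., h_s ∈ ℝ^d be such that the subgroup h_1 ℤ + ... + h_s ℤ is dense in ℝ^d. If Δ_{h_k}^{m+1} f = 0 identically for k = 1, ..., s, then f is a polynomial function in d real variables of total degree at most sm. -/

import Mathlib

/-!
In the group algebra `ℤ[M]`, the difference operator `Δ_a` is the image of `δ_a = [a] - 1`, and
the elements annihilating `f` form an ideal. Since `δ_{a+b} = δ_a [b] + δ_b` and `δ_a ∣ δ_{c a}`,
the binomial theorem turns `δ_{h_k}^{m+1} f = 0` into `δ_z^{sm+1} f = 0` for every `z` in the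
subgroup generated by the `h_k`; by continuity and density, `Δ_z^{sm+1} f = 0` for every `z`.

A continuous function with all `(n+1)`-st differences zero is a polynomial (Fréchet). On each
arithmetic progression it agrees with a polynomial by Newton's interpolation formula; the
progressions `-N + ℕ/q` all contain `ℕ`, so these polynomials coincide and `f` is polynomial on `ℚ`,
hence on `ℝ`. In several variables, interpolate in the first variable at `0, …, n` with
coefficients that are polynomial by induction. Finally, along a line `y ↦ P(y v)` the
coefficients are the homogeneous components of `P` at `v`, so the one-variable degree bound kills
every homogeneous component of degree `> n`.
-/

open fwdDiff fwdDiff_aux Finset Polynomial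

section ForwardDifference

variable {M M' G : Type*} [AddCommMonoid M] [AddCommMonoid M'] [AddCommGroup G]

lemma fwdDiff_iter_comp_of_map_add_nsmul {e : M → M'} {t : M} {τ : M'}
    (he : ∀ x (k : ℕ), e (x + k • t) = e x + k • τ) (f : M' → G) (n : ℕ) (x : M) :
    Δ_[t] ^[n] (fun x => f (e x)) x = Δ_[τ] ^[n] f (e x) := by
  simp only [fwdDiff_iter_eq_sum_shift, he]

lemma fwdDiff_iter_comp_eq_zero {e L : M → M'} (he : ∀ x t (k : ℕ), e (x + k • t) = e x + k • L t)
    {f : M' → G} {n : ℕ} (hf : ∀ τ, Δ_[τ] ^[n] f = 0) (t : M) :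
    Δ_[t] ^[n] (fun x => f (e x)) = 0 :=
  funext fun x => (fwdDiff_iter_comp_of_map_add_nsmul (he · t) f n x).trans (congrFun (hf _) _)

lemma fwdDiff_iter_eq_sum_choose_mul {R : Type*} [CommRing R] (f : M → R) (t : M) (n : ℕ)
    (x : M) :
    Δ_[t] ^[n] f x = ∑ k ∈ range (n + 1), (n.choose k : R) * (-1) ^ (n - k) * f (x + k • t) := by
  rw [fwdDiff_iter_eq_sum_shift]
  refine sum_congr rfl fun k _ => ?_
  rw [zsmul_eq_mul]
  push_cast
  ring

lemma fwdDiff_iter_eq_zero_of_le {f : M → G} {t : M} {n k : ℕ} (hf : Δ_[t] ^[n] f = 0)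
    (hk : n ≤ k) : Δ_[t] ^[k] f = 0 := by
  obtain ⟨k, rfl⟩ := Nat.exists_eq_add_of_le hk
  rw [add_comm, Function.iterate_add_apply, hf]
  exact Function.iterate_fixed (fwdDiff_const t 0) k

theorem fwdDiff_iter_eq_zero_of_dense [TopologicalSpace M] [ContinuousAdd M] [TopologicalSpace G]
    [IsTopologicalAddGroup G] [T2Space G] {f : M → G} (hf : Continuous f) {S : Set M}
    (hS : Dense S) {n : ℕ} (hSf : ∀ z ∈ S, Δ_[z] ^[n] f = 0) (t : M) : Δ_[t] ^[n] f = 0 := by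
  have hcont : Continuous fun z => Δ_[z] ^[n] f := by
    refine continuous_pi fun x => ?_
    simp only [fwdDiff_iter_eq_sum_shift]
    fun_prop
  exact congrFun (hcont.ext_on hS continuous_const hSf) t

theorem exists_polynomial_eval_natCast_eq {K : Type*} [Field K] [CharZero K] {g : M → K}
    {t : M} {n : ℕ} (hg : Δ_[t] ^[n] g = 0) (x : M) :
    ∃ p : K[X], ∀ j : ℕ, g (x + j • t) = p.eval (j : K) := by
  refine ⟨∑ k ∈ range n, C (Δ_[t] ^[k] g x / k.factorial) * descPochhammer K k, fun j => ?_⟩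
  have hchoose (k : ℕ) : j.choose k • Δ_[t] ^[k] g x =
      (C (Δ_[t] ^[k] g x / k.factorial) * descPochhammer K k).eval (j : K) := by
    rw [eval_mul, eval_C, descPochhammer_eval_eq_descFactorial,
      Nat.descFactorial_eq_factorial_mul_choose, nsmul_eq_mul]
    have : (k.factorial : K) ≠ 0 := Nat.cast_ne_zero.mpr k.factorial_ne_zero
    push_cast
    field_simp
  rw [shift_eq_sum_fwdDiff_iter t g j x, eval_finsetSum, ← sum_congr rfl fun k _ => hchoose k]
  have hj : ∑ k ∈ range (j + 1), j.choose k • Δ_[t] ^[k] g x =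
      ∑ k ∈ range (j + 1 + n), j.choose k • Δ_[t] ^[k] g x :=
    sum_subset (range_subset_range.mpr (by omega)) fun k _ hk => by
      rw [Nat.choose_eq_zero_of_lt (by simpa using hk), zero_smul]
  have hn : ∑ k ∈ range n, j.choose k • Δ_[t] ^[k] g x =
      ∑ k ∈ range (j + 1 + n), j.choose k • Δ_[t] ^[k] g x :=
    sum_subset (range_subset_range.mpr (by omega)) fun k _ hk => by
      rw [fwdDiff_iter_eq_zero_of_le hg (by simpa using hk), Pi.zero_apply, smul_zero]
  rw [hj, hn]

end ForwardDifference

section GroupAlgebra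

open AddMonoidAlgebra

variable {M G : Type*} [AddCommGroup M] [AddCommGroup G]

variable (M G) in
noncomputable def translationAlgHom : AddMonoidAlgebra ℤ M →ₐ[ℤ] Module.End ℤ (M → G) :=
  lift ℤ (Module.End ℤ (M → G)) M
    { toFun a := shiftₗ M G a.toAdd
      map_one' := by ext; simp [shiftₗ_apply]
      map_mul' a b := by ext; simp [shiftₗ_apply, add_assoc] }

noncomputable def translationAnnihilator (f : M → G) : Ideal (AddMonoidAlgebra ℤ M) :=
  Ideal.comap (translationAlgHom M G)
    (LinearMap.ker (LinearMap.toSpanSingleton (Module.End ℤ (M → G)) (M → G) f))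

lemma mem_translationAnnihilator {f : M → G} {u : AddMonoidAlgebra ℤ M} :
    u ∈ translationAnnihilator f ↔ translationAlgHom M G u f = 0 := by
  simp [translationAnnihilator]

variable {R : Type*} [CommRing R]

variable (R) in
noncomputable def diffElem (a : M) : AddMonoidAlgebra R M := single a 1 - 1

lemma diffElem_add (a b : M) :
    diffElem R (a + b) = diffElem R a * single b 1 + diffElem R b := by
  simp only [diffElem, sub_mul, one_mul, single_mul_single, mul_one]
  abel

lemma diffElem_dvd_nsmul (n : ℕ) (a : M) : diffElem R a ∣ diffElem R (n • a) := by
  simpa [diffElem, single_pow] using sub_dvd_pow_sub_pow (single a (1 : R)) 1 n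

lemma diffElem_dvd_neg (a : M) : diffElem R a ∣ diffElem R (-a) :=
  ⟨-single (-a) 1, by simp [diffElem, sub_mul, single_mul_single, one_def]⟩

lemma diffElem_dvd_zsmul (c : ℤ) (a : M) : diffElem R a ∣ diffElem R (c • a) := by
  obtain ⟨n, rfl | rfl⟩ := Int.eq_nat_or_neg c
  · simpa using diffElem_dvd_nsmul n a
  · simpa using (diffElem_dvd_nsmul n a).trans (diffElem_dvd_neg _)

lemma translationAlgHom_diffElem (a : M) :
    translationAlgHom M G (diffElem ℤ a) = fwdDiffₗ M G a := by
  simp [translationAlgHom, diffElem, shiftₗ]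

lemma diffElem_pow_mem_translationAnnihilator_iff {f : M → G} {a : M} {n : ℕ} :
    diffElem ℤ a ^ n ∈ translationAnnihilator f ↔ Δ_[a] ^[n] f = 0 := by
  rw [mem_translationAnnihilator, map_pow, translationAlgHom_diffElem, ← coe_fwdDiffₗ_pow]

variable {I : Ideal (AddMonoidAlgebra R M)}

lemma diffElem_zsmul_pow_mem {p : ℕ} {a : M} (ha : diffElem R a ^ p ∈ I) (c : ℤ) :
    diffElem R (c • a) ^ p ∈ I :=
  I.mem_of_dvd (pow_dvd_pow_of_dvd (diffElem_dvd_zsmul c a) p) ha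

lemma diffElem_add_pow_mem {p q : ℕ} {a b : M} (ha : diffElem R a ^ p ∈ I)
    (hb : diffElem R b ^ q ∈ I) : diffElem R (a + b) ^ (p + q - 1) ∈ I := by
  rw [diffElem_add]
  refine I.add_pow_add_pred_mem_of_pow_mem ?_ hb
  rw [mul_pow]
  exact I.mul_mem_right _ ha

lemma diffElem_pow_mem_of_mem_closure {ι : Type*} [Fintype ι] {h : ι → M} {m : ℕ}
    (hI : ∀ i, diffElem R (h i) ^ (m + 1) ∈ I) {z : M}
    (hz : z ∈ AddSubgroup.closure (Set.range h)) :
    diffElem R z ^ (Fintype.card ι * m + 1) ∈ I := by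
  classical
  obtain ⟨c, rfl⟩ := AddSubgroup.mem_closure_range_iff_of_fintype.mp hz
  suffices ∀ t : Finset ι, diffElem R (∑ i ∈ t, c i • h i) ^ (#t * m + 1) ∈ I from this univ
  intro t
  induction t using Finset.induction_on with
  | empty => simp [diffElem, one_def]
  | insert j t hj ih =>
    rw [sum_insert hj, card_insert_of_notMem hj]
    convert diffElem_add_pow_mem (diffElem_zsmul_pow_mem (hI j) (c j)) ih using 2
    ring_nf
    omega

theorem fwdDiff_iter_eq_zero_of_mem_closure {ι : Type*} [Fintype ι] {h : ι → M} {m : ℕ}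
    {f : M → G} (hf : ∀ i, Δ_[h i] ^[m + 1] f = 0) {z : M}
    (hz : z ∈ AddSubgroup.closure (Set.range h)) :
    Δ_[z] ^[Fintype.card ι * m + 1] f = 0 :=
  diffElem_pow_mem_translationAnnihilator_iff.mp <| diffElem_pow_mem_of_mem_closure
    (fun i => diffElem_pow_mem_translationAnnihilator_iff.mpr (hf i)) hz

end GroupAlgebra

theorem Polynomial.natDegree_le_of_fwdDiff_iter_eval_natCast {R : Type*} [CommRing R]
    [IsDomain R] [CharZero R] {p : R[X]} {n : ℕ}
    (hp : ∀ k : ℕ, Δ_[1] ^[n + 1] p.eval (k : R) = 0) : p.natDegree ≤ n := by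
  by_contra! hlt
  obtain ⟨k, hk⟩ := Nat.exists_eq_add_of_le hlt
  have hvanish : Δ_[1] ^[p.natDegree] p.eval 0 = 0 := by
    rw [hk, add_comm, Function.iterate_add_apply, fwdDiff_iter_eq_sum_shift]
    simp [hp]
  have hp0 : p ≠ 0 := by rintro rfl; simp at hlt
  rw [p.fwdDiff_iter_degree_eq_factorial] at hvanish
  simp [hp0, Nat.factorial_ne_zero] at hvanish

theorem Polynomial.natDegree_le_of_fwdDiff_iter_comp_ofReal_eq_zero {p : ℂ[X]} {n : ℕ}
    (hp : Δ_[1] ^[n + 1] (fun y : ℝ => p.eval (y : ℂ)) = 0) : p.natDegree ≤ n :=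
  natDegree_le_of_fwdDiff_iter_eval_natCast fun k => by
    have h := fwdDiff_iter_comp_of_map_add_nsmul (e := ((↑) : ℝ → ℂ)) (t := 1) (τ := 1)
      (by simp) p.eval (n + 1) k
    rw [hp, Complex.ofReal_natCast] at h
    exact h.symm

namespace MvPolynomial

lemma IsHomogeneous.eval_smul {R σ : Type*} [CommSemiring R] {F : MvPolynomial σ R} {n : ℕ}
    (hF : F.IsHomogeneous n) (c : R) (x : σ → R) : eval (c • x) F = c ^ n * eval x F := by
  rw [eval_eq, eval_eq, mul_sum]
  refine sum_congr rfl fun d hd => ?_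
  have hdeg : ∑ i ∈ d.support, d i = n := by
    simpa [Finsupp.weight_apply, Finsupp.sum] using hF (mem_support_iff.mp hd)
  simp only [Pi.smul_apply, smul_eq_mul, mul_pow, prod_mul_distrib, prod_pow_eq_pow_sum, hdeg]
  ring

lemma exists_polynomial_eval_smul_eq {R σ : Type*} [CommSemiring R] (P : MvPolynomial σ R)
    (v : σ → R) : ∃ q : R[X], (∀ y, q.eval y = eval (y • v) P) ∧
      ∀ k, q.coeff k = eval v (homogeneousComponent k P) := by
  refine ⟨∑ i ∈ range (P.totalDegree + 1),
    Polynomial.monomial i (eval v (homogeneousComponent i P)), fun y => ?_, fun k => ?_⟩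
  · conv_rhs => rw [← sum_homogeneousComponent P]
    simp [eval_finsetSum, (homogeneousComponent_isHomogeneous _ _).eval_smul, mul_comm]
  · rw [finsetSum_coeff]
    simp only [Polynomial.coeff_monomial, sum_ite_eq', mem_range]
    split_ifs with hk
    · rfl
    · rw [homogeneousComponent_eq_zero k P (by omega), map_zero]

theorem totalDegree_le_of_fwdDiff_iter_eq_zero {σ : Type*} {P : MvPolynomial σ ℂ} {n : ℕ}
    (hP : ∀ t, Δ_[t] ^[n + 1] (fun x : σ → ℝ => eval (fun i => (x i : ℂ)) P) = 0) :
    P.totalDegree ≤ n := by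
  have hcomp (k : ℕ) (hk : n < k) : homogeneousComponent k P = 0 := by
    refine funext_set (fun _ => Set.range ((↑) : ℝ → ℂ))
      (fun _ => Set.infinite_range_of_injective Complex.ofReal_injective) fun w hw => ?_
    choose v hv using fun i => hw i (Set.mem_univ i)
    obtain rfl : (fun i => (v i : ℂ)) = w := _root_.funext hv
    obtain ⟨q, hq_eval, hq_coeff⟩ := exists_polynomial_eval_smul_eq P (fun i => (v i : ℂ))
    have hline : (fun y : ℝ => q.eval (y : ℂ)) = fun y => eval (fun i => ((y • v) i : ℂ)) P := by
      funext y
      rw [hq_eval]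
      congr 2
      funext i
      simp
    have hq : q.natDegree ≤ n := natDegree_le_of_fwdDiff_iter_comp_ofReal_eq_zero <| by
      rw [hline]
      exact fwdDiff_iter_comp_eq_zero (L := fun t : ℝ => t • v)
        (fun y t k => by rw [add_smul, smul_assoc]) hP 1
    rw [map_zero, ← hq_coeff]
    exact coeff_eq_zero_of_natDegree_lt (by omega)
  refine Finset.sup_le fun d hd => not_lt.mp fun hlt => mem_support_iff.mp hd ?_
  have := congrArg (coeff d) (hcomp _ hlt)
  rwa [coeff_homogeneousComponent, if_pos (show d.degree = d.sum fun _ e => e from rfl),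
    coeff_zero] at this

end MvPolynomial

theorem exists_polynomial_eq_on_progression {g : ℝ → ℂ} {t : ℝ} (ht : t ≠ 0) {n : ℕ}
    (hg : Δ_[t] ^[n] g = 0) (x : ℝ) :
    ∃ p : ℂ[X], ∀ j : ℕ, g (x + j * t) = p.eval ↑(x + j * t) := by
  obtain ⟨q, hq⟩ := exists_polynomial_eval_natCast_eq hg x
  refine ⟨q.comp (C (t : ℂ)⁻¹ * (X - C (x : ℂ))), fun j => ?_⟩
  have ht' : (t : ℂ) ≠ 0 := Complex.ofReal_ne_zero.mpr ht
  rw [← nsmul_eq_mul, hq, eval_comp]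
  simp [mul_comm _ (t : ℂ), ht']

lemma Rat.exists_eq_neg_add_mul_inv (ρ : ℚ) :
    ∃ N j q : ℕ, 0 < q ∧ (ρ : ℝ) = -N + j * (q : ℝ)⁻¹ := by
  refine ⟨ρ.num.natAbs, (ρ.num + ρ.num.natAbs * ρ.den).toNat, ρ.den, ρ.den_pos, ?_⟩
  have hnonneg : 0 ≤ ρ.num + ρ.num.natAbs * ρ.den := by
    have := ρ.den_pos
    rcases Int.natAbs_eq ρ.num with h | h <;> nlinarith
  have hj : (((ρ.num + ρ.num.natAbs * ρ.den).toNat : ℕ) : ℝ) =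
      ρ.num + |(ρ.num : ℝ)| * ρ.den := by
    rw [← Int.cast_natCast, Int.toNat_of_nonneg hnonneg]
    push_cast
    ring
  have : (ρ.den : ℝ) ≠ 0 := by positivity
  rw [hj, Rat.cast_def, Nat.cast_natAbs, Int.cast_abs]
  field_simp
  ring

theorem exists_polynomial_of_fwdDiff_iter_eq_zero {g : ℝ → ℂ} (hg : Continuous g) {n : ℕ}
    (hΔ : ∀ t, Δ_[t] ^[n] g = 0) : ∃ p : ℂ[X], ∀ y : ℝ, g y = p.eval (y : ℂ) := by
  obtain ⟨p, hp⟩ := exists_polynomial_eq_on_progression one_ne_zero (hΔ 1) 0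
  have hnat (i : ℕ) : g i = p.eval (i : ℂ) := by simpa using hp i
  refine ⟨p, congrFun (hg.ext_on Rat.denseRange_cast (by fun_prop) ?_)⟩
  rintro _ ⟨ρ, rfl⟩
  obtain ⟨N, j, q, hq, hρ⟩ := ρ.exists_eq_neg_add_mul_inv
  obtain ⟨p', hp'⟩ :=
    exists_polynomial_eq_on_progression (inv_ne_zero (Nat.cast_ne_zero.mpr hq.ne')) (hΔ _) (-N)
  have hp'p : p' = p := by
    refine eq_of_infinite_eval_eq p' p
      ((Set.infinite_range_of_injective Nat.cast_injective).mono ?_)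
    rintro _ ⟨i, rfl⟩
    have hi : -(N : ℝ) + ((q * (N + i) : ℕ) : ℝ) * (q : ℝ)⁻¹ = i := by
      have : (q : ℝ) ≠ 0 := by positivity
      push_cast
      field_simp
      ring
    have := hp' (q * (N + i))
    rw [hi, hnat] at this
    simpa using this.symm
  simp only [hρ, hp' j, hp'p]

theorem eq_eval_interpolate_of_fwdDiff_iter_eq_zero {g : ℝ → ℂ} (hg : Continuous g) {n : ℕ}
    (hΔ : ∀ t, Δ_[t] ^[n + 1] g = 0) (y : ℝ) :
    g y = (Lagrange.interpolate (range (n + 1)) (Nat.cast : ℕ → ℂ) fun i => g i).eval ↑y := by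
  obtain ⟨p, hp⟩ := exists_polynomial_of_fwdDiff_iter_eq_zero hg hΔ
  have hdeg : p.natDegree ≤ n := natDegree_le_of_fwdDiff_iter_comp_ofReal_eq_zero <| by
    rw [show (fun y : ℝ => p.eval (y : ℂ)) = g from funext fun y => (hp y).symm]
    exact hΔ 1
  rw [hp y, Lagrange.eq_interpolate_of_eval_eq (s := range (n + 1)) (f := p) (fun i : ℕ => g i)
    Nat.cast_injective.injOn ?_ fun i _ => by simp [hp]]
  rw [card_range]
  exact (degree_le_of_natDegree_le hdeg).trans_lt (by exact_mod_cast n.lt_succ_self)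

theorem exists_mvPolynomial_of_fwdDiff_iter_eq_zero {n : ℕ} :
    ∀ {d : ℕ} {f : (Fin d → ℝ) → ℂ}, Continuous f → (∀ t, Δ_[t] ^[n + 1] f = 0) →
      ∃ P : MvPolynomial (Fin d) ℂ, ∀ x, f x = MvPolynomial.eval (fun i => (x i : ℂ)) P
  | 0, f, _, _ =>
    ⟨MvPolynomial.C (f 0), fun x => by rw [MvPolynomial.eval_C, Subsingleton.elim x 0]⟩
  | d + 1, f, hf, hΔ => by
    choose P hP using fun i : ℕ => exists_mvPolynomial_of_fwdDiff_iter_eq_zero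
      (f := fun x => f (Fin.cons (i : ℝ) x)) (by fun_prop)
      (fwdDiff_iter_comp_eq_zero (L := Fin.cons 0)
        (fun x t k => by ext l; cases l using Fin.cases <;> simp) hΔ)
    have hline (x : Fin d → ℝ) : ∀ t, Δ_[t] ^[n + 1] (fun y => f (Fin.cons y x)) = 0 :=
      fwdDiff_iter_comp_eq_zero (L := fun t => Fin.cons t 0)
        (fun y t k => by ext l; cases l using Fin.cases <;> simp) hΔ
    have hC (s : Fin d → ℂ) : (MvPolynomial.eval s).comp MvPolynomial.C = RingHom.id ℂ :=
      RingHom.ext MvPolynomial.eval_C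
    refine ⟨(MvPolynomial.finSuccEquiv ℂ d).symm (∑ i ∈ range (n + 1), Polynomial.C (P i) *
      (Lagrange.basis (range (n + 1)) (Nat.cast : ℕ → ℂ) i).map MvPolynomial.C), fun z => ?_⟩
    rw [← Fin.cons_self_tail z, eq_eval_interpolate_of_fwdDiff_iter_eq_zero (by fun_prop) (hline _),
      show (fun i => ((Fin.cons (z 0) (Fin.tail z) i : ℝ) : ℂ)) =
        Fin.cons (z 0 : ℂ) fun i => (Fin.tail z i : ℂ) from
        Fin.comp_cons Complex.ofReal (z 0) (Fin.tail z),
      MvPolynomial.eval_eq_eval_mv_eval', AlgEquiv.apply_symm_apply, Lagrange.interpolate_apply]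
    simp [Polynomial.map_sum, eval_finsetSum, Polynomial.map_map, hP, hC]

theorem montel_several_variables (d m s : ℕ) (f : (Fin d → ℝ) → ℂ)
    (hcont : Continuous f) (h : Fin s → (Fin d → ℝ))
    (hdense : Dense ((AddSubgroup.closure (Set.range h) : AddSubgroup (Fin d → ℝ)) :
      Set (Fin d → ℝ)))
    (hf : ∀ k : Fin s, ∀ x : Fin d → ℝ,
      ∑ j ∈ Finset.range (m + 2),
        ((m + 1).choose j : ℂ) * (-1) ^ (m + 1 - j) * f (x + j • h k) = 0) :
    ∃ P : MvPolynomial (Fin d) ℂ, P.totalDegree ≤ s * m ∧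
      ∀ x : Fin d → ℝ, f x = MvPolynomial.eval (fun i => (x i : ℂ)) P := by
  have hΔ (k : Fin s) : Δ_[h k] ^[m + 1] f = 0 :=
    funext fun x => (fwdDiff_iter_eq_sum_choose_mul f (h k) (m + 1) x).trans (hf k x)
  have hall : ∀ t, Δ_[t] ^[s * m + 1] f = 0 :=
    fwdDiff_iter_eq_zero_of_dense hcont hdense fun z hz => by
      simpa using fwdDiff_iter_eq_zero_of_mem_closure hΔ hz
  obtain ⟨P, hP⟩ := exists_mvPolynomial_of_fwdDiff_iter_eq_zero hcont hall
  have hPf : (fun x : Fin d → ℝ => MvPolynomial.eval (fun i => (x i : ℂ)) P) = f :=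
    funext fun x => (hP x).symm
  exact ⟨P, MvPolynomial.totalDegree_le_of_fwdDiff_iter_eq_zero (hPf ▸ hall), hP⟩
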